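/- (Proposition, case B < 0.) Let τ > 0 and ϑ ∈ (0,π/2) with B = (τ²+1)cos²ϑ − 1 < 0, and set ã = −τ⁻²·sin²ϑ·B, b̃ = −2τ⁻¹·B, β = √(−B)·cos ϑ. Let F : ℝ → ℝ⁴ be a smooth function satisfying, for all u: F''(u) = ã·F(u) − b̃·J₁F'(u), ⟨F(u),F(u)⟩ = 1, ⟨F'(u),F'(u)⟩ = ã, and ⟨J₁F(u),F'(u)⟩ = −τ⁻¹·sin²ϑ. Then there exist constant vectors w¹, w², w³, w⁴ ∈ ℝ⁴ with ⟨w¹,w¹⟩ = ⟨w²,w²⟩ = 1, ⟨w³,w³⟩ = ⟨w⁴,w⁴⟩ = −1, ⟨w¹,w²⟩ = ⟨w¹,w³⟩ = ⟨w²,w⁴⟩ = ⟨w³,w⁴⟩ = 0, and ⟨w¹,w⁴⟩ = −⟨w²,w³⟩ = −2β/b̃, such that F(u) = cos(b̃u/2)·[cosh(βu)·w¹ + sinh(βu)·w³] + sin(b̃u/2)·[cosh(βu)·w² + sinh(βu)·w⁴] for all u ∈ ℝ. -/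

import Mathlib

noncomputable section

lemma hasDerivAt_cexp_mul (c : ℂ) (u : ℝ) :
    HasDerivAt (fun t : ℝ => Complex.exp (c * t)) (c * Complex.exp (c * u)) u := by
  have h1 : HasDerivAt (fun t : ℝ => ((t : ℝ) : ℂ)) 1 u := (hasDerivAt_id u).ofReal_comp
  have h2 : HasDerivAt (fun t : ℝ => c * (t : ℂ)) c u := by simpa using h1.const_mul c
  exact ((Complex.hasDerivAt_exp (c * u)).comp u h2).congr_deriv (mul_comm _ _)

lemma ode1_zero (c : ℂ) (f : ℝ → ℂ) (hf : ∀ u, HasDerivAt f (c * f u) u) (h0 : f 0 = 0) :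
    ∀ u, f u = 0 := by
  have hg : ∀ u, HasDerivAt (fun t : ℝ => Complex.exp (-c * t) * f t) 0 u := by
    intro u
    have h := (hasDerivAt_cexp_mul (-c) u).mul (hf u)
    refine h.congr_deriv (Eq.symm ?_)
    ring
  have hconst : ∀ u : ℝ, Complex.exp (-c * u) * f u = Complex.exp (-c * 0) * f 0 :=
    fun u => is_const_of_deriv_eq_zero (fun t => (hg t).differentiableAt)
      (fun t => (hg t).deriv) u 0
  intro u
  have h := hconst u
  rw [h0, mul_zero] at h
  exact (mul_eq_zero.mp h).resolve_left (Complex.exp_ne_zero _)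

lemma ode2_zero (β : ℝ) (w w1 : ℝ → ℂ) (hw : ∀ u, HasDerivAt w (w1 u) u)
    (hw1 : ∀ u, HasDerivAt w1 ((β : ℂ) ^ 2 * w u) u) (h0 : w 0 = 0) (h1 : w1 0 = 0) :
    ∀ u, w u = 0 := by
  have hp : ∀ u, w1 u - (β : ℂ) * w u = 0 := by
    apply ode1_zero (-(β : ℂ))
    · intro u
      have h := (hw1 u).sub ((hw u).const_mul (β : ℂ))
      refine h.congr_deriv (Eq.symm ?_)
      ring
    · simp [h0, h1]
  have hw' : ∀ u, HasDerivAt w ((β : ℂ) * w u) u := by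
    intro u
    have h : w1 u = (β : ℂ) * w u := by linear_combination hp u
    rw [← h]; exact hw u
  exact ode1_zero _ w hw' h0

lemma ode_cosh (β : ℝ) (hβ : (β : ℂ) ≠ 0) (w w1 : ℝ → ℂ)
    (hw : ∀ u, HasDerivAt w (w1 u) u)
    (hw1 : ∀ u, HasDerivAt w1 ((β : ℂ) ^ 2 * w u) u) (u : ℝ) :
    w u = Complex.cosh (β * u) * w 0 + Complex.sinh (β * u) * (w1 0 / β) := by
  have hcs : ∀ t : ℝ, HasDerivAt (fun s : ℝ => Complex.cosh (β * s))
      ((β : ℂ) * Complex.sinh (β * t)) t := by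
    intro t
    have h2 : HasDerivAt (fun s : ℝ => (β : ℂ) * (s : ℂ)) (β : ℂ) t := by
      simpa using ((hasDerivAt_id t).const_mul β).ofReal_comp
    have := (Complex.hasDerivAt_cosh ((β : ℂ) * t)).comp t h2
    exact this.congr_deriv (mul_comm _ _)
  have hsc : ∀ t : ℝ, HasDerivAt (fun s : ℝ => Complex.sinh (β * s))
      ((β : ℂ) * Complex.cosh (β * t)) t := by
    intro t
    have h2 : HasDerivAt (fun s : ℝ => (β : ℂ) * (s : ℂ)) (β : ℂ) t := by
      simpa using ((hasDerivAt_id t).const_mul β).ofReal_comp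
    have := (Complex.hasDerivAt_sinh ((β : ℂ) * t)).comp t h2
    exact this.congr_deriv (mul_comm _ _)
  set g : ℝ → ℂ := fun t => Complex.cosh (β * t) * w 0 + Complex.sinh (β * t) * (w1 0 / β) with hgdef
  set g1 : ℝ → ℂ := fun t => (β : ℂ) * Complex.sinh (β * t) * w 0 +
      (β : ℂ) * Complex.cosh (β * t) * (w1 0 / β) with hg1def
  have hgd : ∀ t, HasDerivAt g (g1 t) t := fun t =>
    ((hcs t).mul_const (w 0)).add ((hsc t).mul_const (w1 0 / β))
  have hg1d : ∀ t, HasDerivAt g1 ((β : ℂ) ^ 2 * g t) t := by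
    intro t
    have h := (((hsc t).const_mul (β : ℂ)).mul_const (w 0)).add
      (((hcs t).const_mul (β : ℂ)).mul_const (w1 0 / β))
    refine h.congr_deriv (Eq.symm ?_)
    simp only [hgdef]
    ring
  have hzero := ode2_zero β (fun t => w t - g t) (fun t => w1 t - g1 t)
    (fun t => (hw t).sub (hgd t))
    (fun t => by
      have h := (hw1 t).sub (hg1d t)
      refine h.congr_deriv (Eq.symm ?_)
      ring)
    (by
      simp only [hgdef]
      norm_num [Complex.cosh_zero, Complex.sinh_zero])
    (by
      simp only [hg1def]
      norm_num [Complex.sinh_zero, Complex.cosh_zero]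
      field_simp
      ring)
  have h := hzero u
  have h2 : w u = g u := by linear_combination h
  simpa [hgdef] using h2

lemma ode_rot (h β : ℝ) (hβ : (β : ℂ) ≠ 0) (z z1 : ℝ → ℂ)
    (hz : ∀ u, HasDerivAt z (z1 u) u)
    (hz1 : ∀ u, HasDerivAt z1 (((β : ℂ) ^ 2 + (h : ℂ) ^ 2) * z u -
      Complex.I * (2 * h) * z1 u) u) (u : ℝ) :
    z u = Complex.exp (-(Complex.I * h * u)) *
      (Complex.cosh (β * u) * z 0 +
        Complex.sinh (β * u) * ((z1 0 + Complex.I * h * z 0) / β)) := by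
  set w : ℝ → ℂ := fun t => Complex.exp (Complex.I * h * t) * z t with hwdef
  set w1 : ℝ → ℂ := fun t => Complex.exp (Complex.I * h * t) *
      (Complex.I * h * z t + z1 t) with hw1def
  have hw : ∀ t, HasDerivAt w (w1 t) t := by
    intro t
    have hh := (hasDerivAt_cexp_mul (Complex.I * h) t).mul (hz t)
    refine hh.congr_deriv (Eq.symm ?_)
    simp only [hw1def]
    ring
  have hw1 : ∀ t, HasDerivAt w1 ((β : ℂ) ^ 2 * w t) t := by
    intro t
    have hh := (hasDerivAt_cexp_mul (Complex.I * h) t).mul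
      (((hz t).const_mul (Complex.I * h)).add (hz1 t))
    refine hh.congr_deriv (Eq.symm ?_)
    simp only [hwdef, Pi.add_apply]
    linear_combination (-(Complex.exp (Complex.I * h * t)) * z t * (h : ℂ) ^ 2) * Complex.I_sq
  have key := ode_cosh β hβ w w1 hw hw1 u
  have hw0 : w 0 = z 0 := by simp [hwdef]
  have hw10 : w1 0 = z1 0 + Complex.I * h * z 0 := by
    simp only [hw1def]
    norm_num
    ring
  rw [hw0, hw10] at key
  have hne : Complex.exp (Complex.I * h * u) ≠ 0 := Complex.exp_ne_zero _
  rw [show -(Complex.I * (h : ℂ) * u) = -(Complex.I * h * u) from rfl, Complex.exp_neg]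
  have key2 : (β : ℂ) * w u = Complex.cosh ((β : ℂ) * u) * z 0 * β +
      Complex.sinh ((β : ℂ) * u) * (z1 0 + Complex.I * h * z 0) := by
    rw [key]
    field_simp
  simp only [hwdef] at key2
  field_simp
  rw [mul_comm (u : ℂ) (β : ℂ)]
  linear_combination key2


/-- The semi-definite inner product of signature (2,2) on ℝ⁴. -/
def ip (v w : Fin 4 → ℝ) : ℝ := v 0 * w 0 + v 1 * w 1 - v 2 * w 2 - v 3 * w 3

/-- The complex structure J₁ of ℝ⁴. -/
def J1 (v : Fin 4 → ℝ) : Fin 4 → ℝ := ![-v 1, v 0, -v 3, v 2]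

set_option maxHeartbeats 1000000 in
theorem position_vector_B_neg (τ ϑ B a b β : ℝ)
    (hτ : 0 < τ) (hϑ : ϑ ∈ Set.Ioo 0 (Real.pi / 2))
    (hB : B = (τ ^ 2 + 1) * Real.cos ϑ ^ 2 - 1) (hBneg : B < 0)
    (ha : a = -(Real.sin ϑ ^ 2 * B) / τ ^ 2) (hb : b = -(2 * B) / τ)
    (hβ : β = Real.sqrt (-B) * Real.cos ϑ)
    (F : ℝ → Fin 4 → ℝ) (hF : ContDiff ℝ (⊤ : ℕ∞) F)
    (hode : ∀ u, deriv (deriv F) u = a • F u - b • J1 (deriv F u))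
    (hFF : ∀ u, ip (F u) (F u) = 1)
    (hFuFu : ∀ u, ip (deriv F u) (deriv F u) = a)
    (hJFFu : ∀ u, ip (J1 (F u)) (deriv F u) = -(Real.sin ϑ ^ 2) / τ) :
    ∃ w₁ w₂ w₃ w₄ : Fin 4 → ℝ,
      ip w₁ w₁ = 1 ∧ ip w₂ w₂ = 1 ∧ ip w₃ w₃ = -1 ∧ ip w₄ w₄ = -1 ∧
      ip w₁ w₂ = 0 ∧ ip w₁ w₃ = 0 ∧ ip w₂ w₄ = 0 ∧ ip w₃ w₄ = 0 ∧
      ip w₁ w₄ = -(2 * β) / b ∧ ip w₂ w₃ = 2 * β / b ∧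
      ∀ u : ℝ,
        F u = Real.cos (b * u / 2) • (Real.cosh (β * u) • w₁ + Real.sinh (β * u) • w₃) +
              Real.sin (b * u / 2) • (Real.cosh (β * u) • w₂ + Real.sinh (β * u) • w₄) := by
  obtain ⟨hϑ1, hϑ2⟩ := hϑ
  have hτne : τ ≠ 0 := ne_of_gt hτ
  have hc : 0 < Real.cos ϑ := Real.cos_pos_of_mem_Ioo ⟨by linarith [Real.pi_pos], hϑ2⟩
  have hpyth : Real.sin ϑ ^ 2 + Real.cos ϑ ^ 2 = 1 := Real.sin_sq_add_cos_sq ϑ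
  have hβ2 : β ^ 2 = -B * Real.cos ϑ ^ 2 := by
    rw [hβ, mul_pow, Real.sq_sqrt (by linarith)]
  have hβpos : 0 < β := by
    rw [hβ]
    exact mul_pos (Real.sqrt_pos.mpr (by linarith)) hc
  have hβne : β ≠ 0 := ne_of_gt hβpos
  have hbpos : 0 < b := by
    rw [hb]
    exact div_pos (by linarith) hτ
  have hbne : b ≠ 0 := ne_of_gt hbpos
  have hBval : B + Real.sin ϑ ^ 2 = τ ^ 2 * Real.cos ϑ ^ 2 := by
    rw [hB]; linear_combination hpyth
  have key_a : a = β ^ 2 + (b / 2) ^ 2 := by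
    rw [ha, hb, hβ2]
    field_simp
    linear_combination (-B) * hBval
  have key_w3 : a - b * Real.sin ϑ ^ 2 / τ + (b / 2) ^ 2 = -β ^ 2 := by
    rw [ha, hb, hβ2]
    field_simp
    linear_combination B * hBval
  have key_w14 : (b / 2 - Real.sin ϑ ^ 2 / τ) * b = -(2 * β ^ 2) := by
    rw [hb, hβ2]
    field_simp
    linear_combination B * hBval
  -- derivative plumbing
  have hdF : Differentiable ℝ F := hF.differentiable (by simp)
  have hdF' : Differentiable ℝ (deriv F) := by
    have h2 : ContDiff ℝ (⊤ : ℕ∞) F := hF.of_le (by simp)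
    exact ((contDiff_infty_iff_deriv.mp h2).2).differentiable (by simp)
  have hFi : ∀ (t : ℝ) (i : Fin 4), HasDerivAt (fun s => F s i) (deriv F t i) t :=
    fun t => hasDerivAt_pi.mp (hdF t).hasDerivAt
  have hFi' : ∀ (t : ℝ) (i : Fin 4),
      HasDerivAt (fun s => deriv F s i) (deriv (deriv F) t i) t :=
    fun t => hasDerivAt_pi.mp (hdF' t).hasDerivAt
  have horth : ∀ t, ip (F t) (deriv F t) = 0 := by
    intro t
    have hD : HasDerivAt (fun s => ip (F s) (F s)) (2 * ip (F t) (deriv F t)) t := by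
      have hh := ((((hFi t 0).mul (hFi t 0)).add ((hFi t 1).mul (hFi t 1))).sub
        ((hFi t 2).mul (hFi t 2))).sub ((hFi t 3).mul (hFi t 3))
      refine hh.congr_deriv (Eq.symm ?_)
      simp only [ip]
      ring
    have hconst : deriv (fun s => ip (F s) (F s)) t = 0 := by
      have he : (fun s => ip (F s) (F s)) = fun _ => (1 : ℝ) := funext fun s => hFF s
      rw [he, deriv_const]
    rw [hD.deriv] at hconst
    linarith
  -- J1 component lemmas
  have hJ0 : ∀ x : Fin 4 → ℝ, J1 x 0 = -x 1 := fun x => rfl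
  have hJ1 : ∀ x : Fin 4 → ℝ, J1 x 1 = x 0 := fun x => rfl
  have hJ2 : ∀ x : Fin 4 → ℝ, J1 x 2 = -x 3 := fun x => rfl
  have hJ3 : ∀ x : Fin 4 → ℝ, J1 x 3 = x 2 := fun x => rfl
  -- facts at 0
  have H1 : F 0 0 * F 0 0 + F 0 1 * F 0 1 - F 0 2 * F 0 2 - F 0 3 * F 0 3 = 1 := hFF 0
  have H2 : deriv F 0 0 * deriv F 0 0 + deriv F 0 1 * deriv F 0 1 -
      deriv F 0 2 * deriv F 0 2 - deriv F 0 3 * deriv F 0 3 = a := hFuFu 0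
  have H3 : -F 0 1 * deriv F 0 0 + F 0 0 * deriv F 0 1 -
      -F 0 3 * deriv F 0 2 - F 0 2 * deriv F 0 3 = -(Real.sin ϑ ^ 2) / τ := hJFFu 0
  have H4 : F 0 0 * deriv F 0 0 + F 0 1 * deriv F 0 1 -
      F 0 2 * deriv F 0 2 - F 0 3 * deriv F 0 3 = 0 := horth 0
  have key_aC : (a : ℂ) = (β : ℂ) ^ 2 + ((b : ℂ) / 2) ^ 2 := by exact_mod_cast key_a
  -- the pair identity
  have pairkey : ∀ i j : Fin 4, (∀ x : Fin 4 → ℝ, J1 x i = -x j) →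
      (∀ x : Fin 4 → ℝ, J1 x j = x i) → ∀ u : ℝ,
      ((F u i : ℂ) + (F u j : ℂ) * Complex.I) =
        Complex.exp (-(Complex.I * ((b / 2 : ℝ) : ℂ) * (u : ℂ))) *
          (Complex.cosh ((β : ℂ) * (u : ℂ)) * ((F 0 i : ℂ) + (F 0 j : ℂ) * Complex.I) +
            Complex.sinh ((β : ℂ) * (u : ℂ)) *
              ((((deriv F 0 i : ℂ) + (deriv F 0 j : ℂ) * Complex.I) +
                Complex.I * ((b / 2 : ℝ) : ℂ) * ((F 0 i : ℂ) + (F 0 j : ℂ) * Complex.I)) /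
                (β : ℂ))) := by
    intro i j hJic hJjc u
    have hz : ∀ t : ℝ, HasDerivAt (fun s : ℝ => ((F s i : ℂ) + (F s j : ℂ) * Complex.I))
        ((deriv F t i : ℂ) + (deriv F t j : ℂ) * Complex.I) t :=
      fun t => ((hFi t i).ofReal_comp).add (((hFi t j).ofReal_comp).mul_const Complex.I)
    have hz1 : ∀ t : ℝ, HasDerivAt
        (fun s : ℝ => ((deriv F s i : ℂ) + (deriv F s j : ℂ) * Complex.I))
        (((β : ℂ) ^ 2 + (((b / 2 : ℝ)) : ℂ) ^ 2) * ((F t i : ℂ) + (F t j : ℂ) * Complex.I) -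
          Complex.I * (2 * (((b / 2 : ℝ)) : ℂ)) *
            ((deriv F t i : ℂ) + (deriv F t j : ℂ) * Complex.I)) t := by
      intro t
      have hci : HasDerivAt (fun s : ℝ => deriv F s i) (a * F t i + b * deriv F t j) t := by
        have hh := hFi' t i
        have he : deriv (deriv F) t i = a * F t i + b * deriv F t j := by
          rw [hode t]
          simp only [Pi.sub_apply, Pi.smul_apply, smul_eq_mul, hJic]
          ring
        rwa [he] at hh
      have hcj : HasDerivAt (fun s : ℝ => deriv F s j) (a * F t j - b * deriv F t i) t := by
        have hh := hFi' t j
        have he : deriv (deriv F) t j = a * F t j - b * deriv F t i := by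
          rw [hode t]
          simp only [Pi.sub_apply, Pi.smul_apply, smul_eq_mul, hJjc]
        rwa [he] at hh
      have hR := (hci.ofReal_comp).add ((hcj.ofReal_comp).mul_const Complex.I)
      refine hR.congr_deriv (Eq.symm ?_)
      push_cast
      linear_combination (-((F t i : ℂ) + (F t j : ℂ) * Complex.I)) * key_aC -
        (b : ℂ) * (deriv F t j : ℂ) * Complex.I_sq
    exact ode_rot (b / 2) β (by exact_mod_cast hβne) _ _ hz hz1 u
  -- the w₃ vector
  set W3 : Fin 4 → ℝ := β⁻¹ • (deriv F 0 + (b / 2) • J1 (F 0)) with hW3def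
  have P : ∀ i : Fin 4, W3 i = β⁻¹ * (deriv F 0 i + b / 2 * J1 (F 0) i) := fun i => rfl
  have Q0 : W3 0 = β⁻¹ * (deriv F 0 0 - b / 2 * F 0 1) := by rw [P 0, hJ0]; ring
  have Q1 : W3 1 = β⁻¹ * (deriv F 0 1 + b / 2 * F 0 0) := by rw [P 1, hJ1]
  have Q2 : W3 2 = β⁻¹ * (deriv F 0 2 - b / 2 * F 0 3) := by rw [P 2, hJ2]; ring
  have Q3 : W3 3 = β⁻¹ * (deriv F 0 3 + b / 2 * F 0 2) := by rw [P 3, hJ3]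
  -- re/im extraction
  have hexp : ∀ u : ℝ, Complex.exp (-(Complex.I * ((b / 2 : ℝ) : ℂ) * (u : ℂ))) =
      ((Real.cos (b * u / 2) : ℝ) : ℂ) - ((Real.sin (b * u / 2) : ℝ) : ℂ) * Complex.I := by
    intro u
    rw [show -(Complex.I * ((b / 2 : ℝ) : ℂ) * (u : ℂ)) =
      ((-(b * u / 2) : ℝ) : ℂ) * Complex.I by push_cast; ring]
    rw [Complex.exp_mul_I, ← Complex.ofReal_cos, ← Complex.ofReal_sin,
      Real.cos_neg, Real.sin_neg]
    push_cast
    ring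
  have hcosh : ∀ u : ℝ, Complex.cosh ((β : ℂ) * (u : ℂ)) =
      ((Real.cosh (β * u) : ℝ) : ℂ) := by
    intro u; push_cast; ring
  have hsinh : ∀ u : ℝ, Complex.sinh ((β : ℂ) * (u : ℂ)) =
      ((Real.sinh (β * u) : ℝ) : ℂ) := by
    intro u; push_cast; ring
  have final2 : ∀ i j : Fin 4, (∀ x : Fin 4 → ℝ, J1 x i = -x j) →
      (∀ x : Fin 4 → ℝ, J1 x j = x i) → ∀ u : ℝ,
      (F u i = Real.cos (b * u / 2) * (Real.cosh (β * u) * F 0 i + Real.sinh (β * u) * W3 i) +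
        Real.sin (b * u / 2) * (Real.cosh (β * u) * F 0 j + Real.sinh (β * u) * W3 j)) ∧
      (F u j = Real.cos (b * u / 2) * (Real.cosh (β * u) * F 0 j + Real.sinh (β * u) * W3 j) -
        Real.sin (b * u / 2) * (Real.cosh (β * u) * F 0 i + Real.sinh (β * u) * W3 i)) := by
    intro i j hJic hJjc u
    have Z := pairkey i j hJic hJjc u
    have hW3i : W3 i = β⁻¹ * (deriv F 0 i - b / 2 * F 0 j) := by rw [P i, hJic]; ring
    have hW3j : W3 j = β⁻¹ * (deriv F 0 j + b / 2 * F 0 i) := by rw [P j, hJjc]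
    have hββC : (β : ℂ) * ((β : ℝ) : ℂ)⁻¹ = 1 := mul_inv_cancel₀ (by exact_mod_cast hβne)
    have hδ : (((deriv F 0 i : ℂ) + (deriv F 0 j : ℂ) * Complex.I) +
        Complex.I * ((b / 2 : ℝ) : ℂ) * ((F 0 i : ℂ) + (F 0 j : ℂ) * Complex.I)) / (β : ℂ) =
        ((W3 i : ℝ) : ℂ) + ((W3 j : ℝ) : ℂ) * Complex.I := by
      rw [hW3i, hW3j, div_eq_iff (show (β : ℂ) ≠ 0 by exact_mod_cast hβne)]
      push_cast
      linear_combination (-(((deriv F 0 i : ℂ) - (b : ℂ) / 2 * (F 0 j : ℂ)) +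
        ((deriv F 0 j : ℂ) + (b : ℂ) / 2 * (F 0 i : ℂ)) * Complex.I)) * hββC +
        ((b : ℂ) / 2 * (F 0 j : ℂ)) * Complex.I_sq
    rw [hδ, hexp u, hcosh u, hsinh u] at Z
    constructor
    · have hre := congrArg Complex.re Z
      simp only [Complex.add_re, Complex.sub_re, Complex.mul_re, Complex.add_im,
        Complex.sub_im, Complex.mul_im, Complex.I_re, Complex.I_im, Complex.ofReal_re,
        Complex.ofReal_im, mul_zero, zero_mul, mul_one, one_mul, sub_zero, zero_sub,
        add_zero, zero_add, neg_zero, neg_neg] at hre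
      linear_combination hre
    · have him := congrArg Complex.im Z
      simp only [Complex.add_re, Complex.sub_re, Complex.mul_re, Complex.add_im,
        Complex.sub_im, Complex.mul_im, Complex.I_re, Complex.I_im, Complex.ofReal_re,
        Complex.ofReal_im, mul_zero, zero_mul, mul_one, one_mul, sub_zero, zero_sub,
        add_zero, zero_add, neg_zero, neg_neg] at him
      linear_combination him
  have R0 : β * W3 0 = deriv F 0 0 - b / 2 * F 0 1 := by rw [Q0]; field_simp
  have R1 : β * W3 1 = deriv F 0 1 + b / 2 * F 0 0 := by rw [Q1]; field_simp
  have R2 : β * W3 2 = deriv F 0 2 - b / 2 * F 0 3 := by rw [Q2]; field_simp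
  have R3 : β * W3 3 = deriv F 0 3 + b / 2 * F 0 2 := by rw [Q3]; field_simp
  have hbb : b * b⁻¹ = 1 := mul_inv_cancel₀ hbne
  refine ⟨F 0, -J1 (F 0), W3, -J1 W3, ?_, ?_, ?_, ?_, ?_, ?_, ?_, ?_, ?_, ?_, ?_⟩
  · exact hFF 0
  · simp only [ip, Pi.neg_apply, hJ0, hJ1, hJ2, hJ3]
    linear_combination H1
  · simp only [ip]
    rw [Q0, Q1, Q2, Q3]
    field_simp
    linear_combination 4 * (H2 + b * H3 + (b / 2) ^ 2 * H1 + key_w3)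
  · simp only [ip, Pi.neg_apply, hJ0, hJ1, hJ2, hJ3]
    rw [Q0, Q1, Q2, Q3]
    field_simp
    linear_combination 4 * (H2 + b * H3 + (b / 2) ^ 2 * H1 + key_w3)
  · simp only [ip, Pi.neg_apply, hJ0, hJ1, hJ2, hJ3]
    ring
  · simp only [ip]
    rw [Q0, Q1, Q2, Q3]
    field_simp
    linear_combination 2 * H4
  · simp only [ip, Pi.neg_apply, hJ0, hJ1, hJ2, hJ3]
    rw [Q0, Q1, Q2, Q3]
    field_simp
    linear_combination 2 * H4
  · simp only [ip, Pi.neg_apply, hJ0, hJ1, hJ2, hJ3]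
    rw [Q0, Q1, Q2, Q3]
    ring
  · simp only [ip, Pi.neg_apply, hJ0, hJ1, hJ2, hJ3]
    apply mul_left_cancel₀ (mul_ne_zero hβne hbne)
    linear_combination b * F 0 0 * R1 - b * F 0 1 * R0 - b * F 0 2 * R3 + b * F 0 3 * R2 +
      b * H3 + (b ^ 2 / 2) * H1 + key_w14 + 2 * β ^ 2 * hbb
  · simp only [ip, Pi.neg_apply, hJ0, hJ1, hJ2, hJ3]
    apply mul_left_cancel₀ (mul_ne_zero hβne hbne)
    linear_combination -(b * F 0 0 * R1 - b * F 0 1 * R0 - b * F 0 2 * R3 + b * F 0 3 * R2 +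
      b * H3 + (b ^ 2 / 2) * H1 + key_w14 + 2 * β ^ 2 * hbb)
  · intro u
    have A := final2 0 1 hJ0 hJ1 u
    have C := final2 2 3 hJ2 hJ3 u
    funext k
    fin_cases k <;>
      simp only [Fin.zero_eta, Fin.mk_one, Fin.reduceFinMk]
    · simp only [Pi.add_apply, Pi.smul_apply, smul_eq_mul, Pi.neg_apply, hJ0, hJ1, hJ2, hJ3]
      linear_combination A.1
    · simp only [Pi.add_apply, Pi.smul_apply, smul_eq_mul, Pi.neg_apply, hJ0, hJ1, hJ2, hJ3]
      linear_combination A.2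
    · simp only [Pi.add_apply, Pi.smul_apply, smul_eq_mul, Pi.neg_apply, hJ0, hJ1, hJ2, hJ3]
      linear_combination C.1
    · simp only [Pi.add_apply, Pi.smul_apply, smul_eq_mul, Pi.neg_apply, hJ0, hJ1, hJ2, hJ3]
      linear_combination C.2
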